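/- Let v and w be words over {0,1,•} of lengths M−1 and N−1 respectively. Then Δ ↦ dec(Δ) is a bijection from the set of M,N-invariant sets fitting (•v, •w) onto the set of M,N-invariant sets fitting (v•, w•); in particular dec(Δ) is again M,N-invariant for such Δ. Moreover this bijection preserves area and pdinv: area(dec(Δ)) = area(Δ) and pdinv(dec(Δ)) = pdinv(Δ). -/
import Mathlib


/-- The alphabet {0, 1, •}. -/
inductive Symb where
  | zero : Symb
  | one : Symb
  | bullet : Symb
deriving DecidableEq

/-- An `M,N`-invariant set: a subset of ℕ with finite complement,
closed under adding `M` and adding `N`. -/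
def Invariant (M N : ℕ) (Δ : Set ℕ) : Prop :=
  {n : ℕ | n ∉ Δ}.Finite ∧ ∀ i ∈ Δ, i + M ∈ Δ ∧ i + N ∈ Δ

/-- `c` is a north step of `Δ`: `c ∉ Δ` and `c + N ∈ Δ`. -/
def NorthStep (N : ℕ) (Δ : Set ℕ) (c : ℕ) : Prop := c ∉ Δ ∧ c + N ∈ Δ

/-- `c` is an east step of `Δ`: `c ∉ Δ` and `c + M ∈ Δ`. -/
def EastStep (M : ℕ) (Δ : Set ℕ) (c : ℕ) : Prop := c ∉ Δ ∧ c + M ∈ Δ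

/-- `area Δ` is the number of `c ≥ M + N` with `c ∉ Δ`. -/
noncomputable def area (M N : ℕ) (Δ : Set ℕ) : ℕ := {c : ℕ | M + N ≤ c ∧ c ∉ Δ}.ncard

/-- `pdinv Δ` is the number of pairs `(c, d)` with `c < d`, `M ≤ d < c + M`,
`c` a north step of `Δ`, and `d ∉ Δ`. -/
noncomputable def pdinv (M N : ℕ) (Δ : Set ℕ) : ℕ :=
  {p : ℕ × ℕ | p.1 < p.2 ∧ M ≤ p.2 ∧ p.2 < p.1 + M ∧ NorthStep N Δ p.1 ∧ p.2 ∉ Δ}.ncard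

/-- `Δ` fits the pair of words `(v, w)`, where `v` has length `M` and `w` has length `N`. -/
def Fits (M N : ℕ) (Δ : Set ℕ) (v w : List Symb) : Prop :=
  v.length = M ∧ w.length = N ∧
  (∀ (i : ℕ) (hi : i < v.length),
    (v.get ⟨i, hi⟩ = Symb.bullet ↔ i ∈ Δ) ∧
    (v.get ⟨i, hi⟩ = Symb.one ↔ NorthStep N Δ i) ∧
    (v.get ⟨i, hi⟩ = Symb.zero ↔ (i ∉ Δ ∧ i + N ∉ Δ))) ∧
  (∀ (i : ℕ) (hi : i < w.length),
    (w.get ⟨i, hi⟩ = Symb.bullet ↔ i ∈ Δ) ∧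
    (w.get ⟨i, hi⟩ = Symb.one ↔ EastStep M Δ i) ∧
    (w.get ⟨i, hi⟩ = Symb.zero ↔ (i ∉ Δ ∧ i + M ∉ Δ)))

/-- Decrement: `dec Δ = {i : ℕ | i + 1 ∈ Δ}`. -/
def dec (Δ : Set ℕ) : Set ℕ := {i : ℕ | i + 1 ∈ Δ}

lemma dec_mem {Δ : Set ℕ} {n : ℕ} : n ∈ dec Δ ↔ n + 1 ∈ Δ := Iff.rfl

lemma dec_invariant {M N : ℕ} {Δ : Set ℕ} (h : Invariant M N Δ) :
    Invariant M N (dec Δ) := by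
  refine ⟨?_, ?_⟩
  · have heq : {n : ℕ | n ∉ dec Δ} = (fun n => n + 1) ⁻¹' {n : ℕ | n ∉ Δ} := rfl
    rw [heq]
    exact h.1.preimage (Function.Injective.injOn (fun a b hab => by omega))
  · intro i hi
    have h1 := (h.2 (i + 1) hi).1
    have h2 := (h.2 (i + 1) hi).2
    constructor
    · show i + M + 1 ∈ Δ; rw [show i + M + 1 = i + 1 + M by omega]; exact h1
    · show i + N + 1 ∈ Δ; rw [show i + N + 1 = i + 1 + N by omega]; exact h2

lemma area_dec {M N : ℕ} {Δ : Set ℕ} (h0 : 0 ∈ Δ) (h : Invariant M N Δ) :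
    area M N (dec Δ) = area M N Δ := by
  have hMN : M + N ∈ Δ := by
    have h1 := (h.2 0 h0).1
    have h2 := (h.2 M (by simpa using h1)).2
    simpa using h2
  have key : (fun c => c + 1) '' {c : ℕ | M + N ≤ c ∧ c ∉ dec Δ} = {c : ℕ | M + N ≤ c ∧ c ∉ Δ} := by
    ext d
    simp only [Set.mem_image, Set.mem_setOf_eq, dec_mem]
    constructor
    · rintro ⟨c, ⟨hc1, hc2⟩, rfl⟩; exact ⟨by show M + N ≤ c + 1; omega, hc2⟩
    · rintro ⟨hd1, hd2⟩
      have hd : d ≠ M + N := by rintro rfl; exact hd2 hMN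
      refine ⟨d - 1, ⟨by omega, ?_⟩, by omega⟩
      rw [show d - 1 + 1 = d by omega]; exact hd2
  have := Set.ncard_image_of_injective {c : ℕ | M + N ≤ c ∧ c ∉ dec Δ}
    (f := fun c => c + 1) (fun a b hab => by simpa using hab)
  unfold area
  rw [← key, this]

lemma pdinv_dec {M N : ℕ} {Δ : Set ℕ} (h0 : 0 ∈ Δ) (h : Invariant M N Δ) :
    pdinv M N (dec Δ) = pdinv M N Δ := by
  have hM : M ∈ Δ := by simpa using (h.2 0 h0).1
  have key : (fun p : ℕ × ℕ => (p.1 + 1, p.2 + 1)) ''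
      {p : ℕ × ℕ | p.1 < p.2 ∧ M ≤ p.2 ∧ p.2 < p.1 + M ∧ NorthStep N (dec Δ) p.1 ∧ p.2 ∉ dec Δ}
      = {p : ℕ × ℕ | p.1 < p.2 ∧ M ≤ p.2 ∧ p.2 < p.1 + M ∧ NorthStep N Δ p.1 ∧ p.2 ∉ Δ} := by
    ext ⟨a, b⟩
    simp only [Set.mem_image, Set.mem_setOf_eq, NorthStep, dec_mem, Prod.mk.injEq, Prod.exists]
    constructor
    · rintro ⟨c, d, ⟨h1, h2, h3, ⟨h4, h5⟩, h6⟩, rfl, rfl⟩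
      refine ⟨by omega, by omega, by omega, ⟨h4, ?_⟩, h6⟩
      rw [show c + 1 + N = c + N + 1 by omega]; exact h5
    · rintro ⟨h1, h2, h3, ⟨h4, h5⟩, h6⟩
      have ha : 1 ≤ a := by rcases Nat.eq_zero_or_pos a with rfl | h; exact absurd h0 h4; omega
      have hb : b ≠ M := by rintro rfl; exact h6 hM
      refine ⟨a - 1, b - 1, ⟨by omega, by omega, by omega, ⟨?_, ?_⟩, ?_⟩, by omega, by omega⟩
      · rw [show a - 1 + 1 = a by omega]; exact h4
      · rw [show a - 1 + N + 1 = a + N by omega]; exact h5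
      · rw [show b - 1 + 1 = b by omega]; exact h6
  have hinj : Function.Injective (fun p : ℕ × ℕ => (p.1 + 1, p.2 + 1)) := by
    intro p q hpq
    simp only [Prod.mk.injEq] at hpq
    exact Prod.ext (by omega) (by omega)
  have := Set.ncard_image_of_injective
    {p : ℕ × ℕ | p.1 < p.2 ∧ M ≤ p.2 ∧ p.2 < p.1 + M ∧ NorthStep N (dec Δ) p.1 ∧ p.2 ∉ dec Δ} hinj
  unfold pdinv
  rw [← key, this]

lemma northStep_dec {N : ℕ} {Δ : Set ℕ} {i : ℕ} :
    NorthStep N (dec Δ) i ↔ NorthStep N Δ (i + 1) := by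
  unfold NorthStep
  rw [dec_mem, dec_mem, show i + N + 1 = i + 1 + N by omega]

lemma eastStep_dec {M : ℕ} {Δ : Set ℕ} {i : ℕ} :
    EastStep M (dec Δ) i ↔ EastStep M Δ (i + 1) := by
  unfold EastStep
  rw [dec_mem, dec_mem, show i + M + 1 = i + 1 + M by omega]

lemma mem0_of_fits {M N : ℕ} {Δ : Set ℕ} {v w : List Symb}
    (hf : Fits M N Δ (Symb.bullet :: v) (Symb.bullet :: w)) : 0 ∈ Δ := by
  have := (hf.2.2.1 0 (by simp)).1
  simpa using this.mp (by simp)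

lemma fits_dec {M N : ℕ} {v w : List Symb} (hv : v.length + 1 = M) (hw : w.length + 1 = N)
    {Δ : Set ℕ} (hinv : Invariant M N Δ)
    (hf : Fits M N Δ (Symb.bullet :: v) (Symb.bullet :: w)) :
    Fits M N (dec Δ) (v ++ [Symb.bullet]) (w ++ [Symb.bullet]) := by
  obtain ⟨hl1, hl2, h3, h4⟩ := hf
  have h0 : 0 ∈ Δ := by
    have := (h3 0 (by simp)).1
    simpa using this.mp (by simp)
  have hM : M ∈ Δ := by simpa using (hinv.2 0 h0).1
  have hN : N ∈ Δ := by simpa using (hinv.2 0 h0).2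
  refine ⟨by simpa using hv, by simpa using hw, ?_, ?_⟩
  · intro i hi
    have hi' : i < v.length + 1 := by simpa using hi
    rcases Nat.lt_or_ge i v.length with hlt | hge
    · have hget : (v ++ [Symb.bullet]).get ⟨i, hi⟩ = v.get ⟨i, hlt⟩ := by
        simp [List.get_eq_getElem, List.getElem_append_left hlt]
      rw [hget]
      have key := h3 (i + 1) (by simp; omega)
      simp only [List.get_eq_getElem, List.getElem_cons_succ] at key
      refine ⟨?_, ?_, ?_⟩
      · simp only [List.get_eq_getElem]
        rw [key.1]; exact Iff.rfl
      · simp only [List.get_eq_getElem]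
        rw [key.2.1, northStep_dec]
      · simp only [List.get_eq_getElem]
        rw [key.2.2, dec_mem, dec_mem, show i + N + 1 = i + 1 + N by omega]
    · have hieq : i = v.length := by omega
      subst hieq
      have hget : (v ++ [Symb.bullet]).get ⟨v.length, hi⟩ = Symb.bullet := by
        simp [List.get_eq_getElem, List.getElem_concat_length]
      rw [hget]
      have hmem : v.length ∈ dec Δ := by rw [dec_mem, hv]; exact hM
      refine ⟨⟨fun _ => hmem, fun _ => rfl⟩, ?_, ?_⟩
      · constructor
        · intro h; exact absurd h (by decide)
        · intro h; exact absurd hmem h.1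
      · constructor
        · intro h; exact absurd h (by decide)
        · intro h; exact absurd hmem h.1
  · intro i hi
    have hi' : i < w.length + 1 := by simpa using hi
    rcases Nat.lt_or_ge i w.length with hlt | hge
    · have hget : (w ++ [Symb.bullet]).get ⟨i, hi⟩ = w.get ⟨i, hlt⟩ := by
        simp [List.get_eq_getElem, List.getElem_append_left hlt]
      rw [hget]
      have key := h4 (i + 1) (by simp; omega)
      simp only [List.get_eq_getElem, List.getElem_cons_succ] at key
      refine ⟨?_, ?_, ?_⟩
      · simp only [List.get_eq_getElem]
        rw [key.1]; exact Iff.rfl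
      · simp only [List.get_eq_getElem]
        rw [key.2.1, eastStep_dec]
      · simp only [List.get_eq_getElem]
        rw [key.2.2, dec_mem, dec_mem, show i + M + 1 = i + 1 + M by omega]
    · have hieq : i = w.length := by omega
      subst hieq
      have hget : (w ++ [Symb.bullet]).get ⟨w.length, hi⟩ = Symb.bullet := by
        simp [List.get_eq_getElem, List.getElem_concat_length]
      rw [hget]
      have hmem : w.length ∈ dec Δ := by rw [dec_mem, hw]; exact hN
      refine ⟨⟨fun _ => hmem, fun _ => rfl⟩, ?_, ?_⟩
      · constructor
        · intro h; exact absurd h (by decide)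
        · intro h; exact absurd hmem h.1
      · constructor
        · intro h; exact absurd h (by decide)
        · intro h; exact absurd hmem h.1

lemma fits_inc {M N : ℕ} {v w : List Symb} (hv : v.length + 1 = M) (hw : w.length + 1 = N)
    {Δ' : Set ℕ} (hinv : Invariant M N Δ')
    (hf : Fits M N Δ' (v ++ [Symb.bullet]) (w ++ [Symb.bullet])) :
    ∃ Δ : Set ℕ, Invariant M N Δ ∧ Fits M N Δ (Symb.bullet :: v) (Symb.bullet :: w) ∧
      dec Δ = Δ' := by
  classical
  set Δ : Set ℕ := {n | n = 0 ∨ ∃ k ∈ Δ', k + 1 = n} with hΔ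
  have hsucc : ∀ n : ℕ, n + 1 ∈ Δ ↔ n ∈ Δ' := by
    intro n
    simp only [hΔ, Set.mem_setOf_eq]
    constructor
    · rintro (h | ⟨k, hk, he⟩)
      · omega
      · have : k = n := by omega
        subst this; exact hk
    · intro h; exact Or.inr ⟨n, h, rfl⟩
  have h0 : 0 ∈ Δ := Or.inl rfl
  have hdec : dec Δ = Δ' := by
    ext n; rw [dec_mem, hsucc]
  obtain ⟨hl1, hl2, h3, h4⟩ := hf
  have hvmem : v.length ∈ Δ' := by
    have := (h3 v.length (by simp)).1
    exact this.mp (by simp [List.get_eq_getElem, List.getElem_concat_length])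
  have hwmem : w.length ∈ Δ' := by
    have := (h4 w.length (by simp)).1
    exact this.mp (by simp [List.get_eq_getElem, List.getElem_concat_length])
  have hMmem : M ∈ Δ := by rw [← hv, hsucc]; exact hvmem
  have hNmem : N ∈ Δ := by rw [← hw, hsucc]; exact hwmem
  have hinvΔ : Invariant M N Δ := by
    refine ⟨?_, ?_⟩
    · apply Set.Finite.subset (hinv.1.image (fun n => n + 1))
      intro n hn
      simp only [hΔ, Set.mem_setOf_eq] at hn
      push_neg at hn
      obtain ⟨hn0, hn1⟩ := hn
      refine ⟨n - 1, fun hm => hn1 (n - 1) hm (by omega), by show n - 1 + 1 = n; omega⟩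
    · intro i hi
      rcases hi with rfl | ⟨k, hk, rfl⟩
      · constructor
        · simpa using hMmem
        · simpa using hNmem
      · constructor
        · rw [show k + 1 + M = k + M + 1 by omega, hsucc]; exact (hinv.2 k hk).1
        · rw [show k + 1 + N = k + N + 1 by omega, hsucc]; exact (hinv.2 k hk).2
  refine ⟨Δ, hinvΔ, ⟨by simpa using hv, by simpa using hw, ?_, ?_⟩, hdec⟩
  · intro i hi
    match i with
    | 0 =>
      rw [show (Symb.bullet :: v).get ⟨0, hi⟩ = Symb.bullet from rfl]
      refine ⟨⟨fun _ => h0, fun _ => rfl⟩, ?_, ?_⟩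
      · constructor
        · intro h; exact absurd h (by decide)
        · intro h; exact absurd h0 h.1
      · constructor
        · intro h; exact absurd h (by decide)
        · intro h; exact absurd h0 h.1
    | j + 1 =>
      have hj : j < v.length := by simpa using hi
      have hget : (Symb.bullet :: v).get ⟨j + 1, hi⟩ = v.get ⟨j, hj⟩ := rfl
      rw [hget]
      have key := h3 j (by simp; omega)
      have hgetk : (v ++ [Symb.bullet]).get ⟨j, by simp; omega⟩ = v.get ⟨j, hj⟩ := by
        simp [List.get_eq_getElem, List.getElem_append_left hj]
      rw [hgetk] at key
      refine ⟨?_, ?_, ?_⟩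
      · rw [key.1, ← hsucc]
      · rw [key.2.1]
        unfold NorthStep
        rw [← hsucc j, ← hsucc (j + N), show j + N + 1 = j + 1 + N by omega]
      · rw [key.2.2, ← hsucc j, ← hsucc (j + N), show j + N + 1 = j + 1 + N by omega]
  · intro i hi
    match i with
    | 0 =>
      rw [show (Symb.bullet :: w).get ⟨0, hi⟩ = Symb.bullet from rfl]
      refine ⟨⟨fun _ => h0, fun _ => rfl⟩, ?_, ?_⟩
      · constructor
        · intro h; exact absurd h (by decide)
        · intro h; exact absurd h0 h.1
      · constructor
        · intro h; exact absurd h (by decide)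
        · intro h; exact absurd h0 h.1
    | j + 1 =>
      have hj : j < w.length := by simpa using hi
      have hget : (Symb.bullet :: w).get ⟨j + 1, hi⟩ = w.get ⟨j, hj⟩ := rfl
      rw [hget]
      have key := h4 j (by simp; omega)
      have hgetk : (w ++ [Symb.bullet]).get ⟨j, by simp; omega⟩ = w.get ⟨j, hj⟩ := by
        simp [List.get_eq_getElem, List.getElem_append_left hj]
      rw [hgetk] at key
      refine ⟨?_, ?_, ?_⟩
      · rw [key.1, ← hsucc]
      · rw [key.2.1]
        unfold EastStep
        rw [← hsucc j, ← hsucc (j + M), show j + M + 1 = j + 1 + M by omega]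
      · rw [key.2.2, ← hsucc j, ← hsucc (j + M), show j + M + 1 = j + 1 + M by omega]


/-- For words `v`, `w` of lengths `M−1`, `N−1`, decrementing gives a
bijection from the `M,N`-invariant sets fitting `(•v, •w)` onto those fitting
`(v•, w•)`; in particular `dec Δ` is again invariant, and the bijection preserves
`area` and `pdinv`. -/
theorem dec_bijection_bullet (M N : ℕ) (hM : 0 < M) (hN : 0 < N)
    (v w : List Symb) (hv : v.length + 1 = M) (hw : w.length + 1 = N) :
    Set.BijOn dec
      {Δ : Set ℕ | Invariant M N Δ ∧ Fits M N Δ (Symb.bullet :: v) (Symb.bullet :: w)}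
      {Δ : Set ℕ | Invariant M N Δ ∧ Fits M N Δ (v ++ [Symb.bullet]) (w ++ [Symb.bullet])} ∧
    ∀ Δ : Set ℕ, Invariant M N Δ → Fits M N Δ (Symb.bullet :: v) (Symb.bullet :: w) →
      Invariant M N (dec Δ) ∧
      area M N (dec Δ) = area M N Δ ∧ pdinv M N (dec Δ) = pdinv M N Δ := by
  constructor
  · refine ⟨?_, ?_, ?_⟩
    · rintro Δ ⟨hinv, hfit⟩
      exact ⟨dec_invariant hinv, fits_dec hv hw hinv hfit⟩
    · rintro Δ₁ ⟨hinv₁, hfit₁⟩ Δ₂ ⟨hinv₂, hfit₂⟩ heq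
      have h01 : 0 ∈ Δ₁ := mem0_of_fits hfit₁
      have h02 : 0 ∈ Δ₂ := mem0_of_fits hfit₂
      ext n
      match n with
      | 0 => exact ⟨fun _ => h02, fun _ => h01⟩
      | k + 1 =>
        constructor
        · intro h
          have : k ∈ dec Δ₁ := h
          rw [heq] at this; exact this
        · intro h
          have : k ∈ dec Δ₂ := h
          rw [← heq] at this; exact this
    · rintro Δ' ⟨hinv', hfit'⟩
      obtain ⟨Δ, h1, h2, h3⟩ := fits_inc hv hw hinv' hfit'
      exact ⟨Δ, ⟨h1, h2⟩, h3⟩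
  · intro Δ hinv hfit
    have h0 : 0 ∈ Δ := mem0_of_fits hfit
    exact ⟨dec_invariant hinv, area_dec h0 hinv, pdinv_dec h0 hinv⟩
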